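/- Let H be a compact connected Lie group and τ an involutive (smooth) automorphism of H with fixed-point subgroup H_τ. Define H* = {x ∈ H : τ x = x⁻¹} and f : H/H_τ → H* by f(k H_τ) = k (τ k)⁻¹. Then f is a well-defined injective immersion; in particular its image {k (τ k)⁻¹ : k ∈ H} is an open subset of H*, and (H being compact) it is also closed in H*. -/

import Mathlib

/-!
Write `σ y = (τ y)⁻¹`: an anti-automorphism whose fixed points form `H*`, with
`σ (y * y) = σ y * σ y` and `k * (τ k)⁻¹ = k * σ k`. Squaring has derivative `2` at `1`, so by
the inverse function theorem it is a local homeomorphism there. An `x ∈ H*` near `1` is then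
`y * y` for some `y` near `1`, and `σ y * σ y = σ x = x = y * y` forces `σ y = y` by local
injectivity, i.e. `x = y * (τ y)⁻¹`. Twisted conjugation `x ↦ k * x * (τ k)⁻¹` preserves `H*`
and the image and moves `1` to `k * (τ k)⁻¹`, so the image is open in `H*`; it is compact, hence
closed.
-/

open Filter Topology Manifold

section

variable {𝕜 : Type*} [NontriviallyNormedField 𝕜] {E : Type*} [NormedAddCommGroup E]
  [NormedSpace 𝕜 E]

theorem HasStrictFDerivAt.diag_of_unital {m : E × E → E} {D : E × E →L[𝕜] E} {c : E}
    (hm : HasStrictFDerivAt m D (c, c)) (hl : ∀ᶠ u in 𝓝 c, m (u, c) = u)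
    (hr : ∀ᶠ u in 𝓝 c, m (c, u) = u) :
    HasStrictFDerivAt (fun v => m (v, v)) ((2 : 𝕜) • ContinuousLinearMap.id 𝕜 E) c := by
  have hinl : D ∘L .inl 𝕜 E E = .id 𝕜 E :=
    ((hm.hasFDerivAt.comp (f := fun u => (u, c)) c (hasFDerivAt_prodMk_left c c))
      |>.congr_of_eventuallyEq (hl.mono fun _ hu => hu.symm)).unique (hasFDerivAt_id c)
  have hinr : D ∘L .inr 𝕜 E E = .id 𝕜 E :=
    ((hm.hasFDerivAt.comp (f := fun u => (c, u)) c (hasFDerivAt_prodMk_right c c))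
      |>.congr_of_eventuallyEq (hr.mono fun _ hu => hu.symm)).unique (hasFDerivAt_id c)
  convert hm.comp (f := fun v => (v, v)) c
    ((hasStrictFDerivAt_id c).prodMk (hasStrictFDerivAt_id c)) using 1
  ext u
  have h1 := congrArg (· u) hinl
  have h2 := congrArg (· u) hinr
  simp only [ContinuousLinearMap.comp_apply, ContinuousLinearMap.inl_apply,
    ContinuousLinearMap.inr_apply, ContinuousLinearMap.id_apply] at h1 h2
  simp only [ContinuousLinearMap.comp_apply, ContinuousLinearMap.prod_apply,
    ContinuousLinearMap.id_apply]
  rw [show ((u, u) : E × E) = (u, 0) + (0, u) by simp, map_add, h1, h2, two_smul]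
  rfl

variable {E' : Type*} [NormedAddCommGroup E'] [NormedSpace 𝕜 E'] {n : WithTop ℕ∞}

theorem ContMDiffAt.contDiffAt_chartAt {M M' : Type*} [TopologicalSpace M] [ChartedSpace E M]
    [TopologicalSpace M'] [ChartedSpace E' M'] {f : M → M'} {x : M}
    (hf : ContMDiffAt 𝓘(𝕜, E) 𝓘(𝕜, E') n f x) :
    ContDiffAt 𝕜 n (chartAt E' (f x) ∘ f ∘ (chartAt E x).symm) (chartAt E x x) := by
  have h := (contMDiffAt_iff.1 hf).2
  simpa [extChartAt, OpenPartialHomeomorph.extend, contDiffWithinAt_univ] using h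

theorem contDiffAt_chartAt_mul {G : Type*} [TopologicalSpace G] [ChartedSpace E G] [Group G]
    [LieGroup 𝓘(𝕜, E) n G] :
    ContDiffAt 𝕜 n (fun p : E × E => chartAt E (1 : G)
      ((chartAt E (1 : G)).symm p.1 * (chartAt E (1 : G)).symm p.2))
      (chartAt E (1 : G) 1, chartAt E (1 : G) 1) := by
  let : ChartedSpace (E × E) (G × G) := prodChartedSpace E G E G
  have h := contMDiff_mul 𝓘(𝕜, E) n (G := G) (1, 1)
  rw [← modelWithCornersSelf_prod] at h
  have h2 := h.contDiffAt_chartAt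
  rw [mul_one] at h2
  exact h2

end

theorem exists_openPartialHomeomorph_eventuallyEq_mul_self {𝕜 : Type*} [RCLike 𝕜]
    {E : Type*} [NormedAddCommGroup E] [NormedSpace 𝕜 E] [CompleteSpace E] {n : WithTop ℕ∞}
    {G : Type*} [TopologicalSpace G] [ChartedSpace E G] [Group G]
    [LieGroup 𝓘(𝕜, E) n G] (hn : n ≠ 0) :
    ∃ e : OpenPartialHomeomorph G G, (1 : G) ∈ e.source ∧ e =ᶠ[𝓝 1] fun y => y * y := by
  have := topologicalGroup_of_lieGroup 𝓘(𝕜, E) n (G := G)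
  set φ := chartAt E (1 : G)
  have h1 : (1 : G) ∈ φ.source := mem_chart_source E 1
  have hc : φ.symm (φ 1) = 1 := φ.left_inv h1
  set m : E × E → E := fun p => φ (φ.symm p.1 * φ.symm p.2)
  have hm : HasStrictFDerivAt m (fderiv 𝕜 m (φ 1, φ 1)) (φ 1, φ 1) :=
    contDiffAt_chartAt_mul.hasStrictFDerivAt hn
  have htarget : φ.target ∈ 𝓝 (φ 1) := φ.open_target.mem_nhds (φ.map_source h1)
  have hsq := hm.diag_of_unital
    (mem_of_superset htarget fun u hu => by simp [m, hc, φ.right_inv hu])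
    (mem_of_superset htarget fun u hu => by simp [m, hc, φ.right_inv hu])
  have htwo : (2 : 𝕜) • ContinuousLinearMap.id 𝕜 E =
      (ContinuousLinearEquiv.smulLeft (Units.mk0 (2 : 𝕜) two_ne_zero) : E ≃L[𝕜] E) := by
    ext; simp
  rw [htwo] at hsq
  set P := hsq.toOpenPartialHomeomorph fun v => m (v, v)
  refine ⟨(φ.trans P).trans φ.symm, ?_, ?_⟩
  · simp [h1, P, hsq.mem_toOpenPartialHomeomorph_source, m, hc, φ.map_source h1]
  · have hsq_tendsto : Tendsto (fun y : G => y * y) (𝓝 1) (𝓝 1) := by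
      simpa using (tendsto_id.mul tendsto_id : Tendsto (fun y : G => y * y) (𝓝 1) (𝓝 (1 * 1)))
    filter_upwards [φ.open_source.mem_nhds h1, hsq_tendsto.eventually (φ.open_source.mem_nhds h1)]
      with y hy hyy
    simp [P, m, φ.left_inv hy, φ.left_inv hyy]

section TwistedSquares

variable {G : Type*} [Group G] {F : Type*} [FunLike F G G] [MonoidHomClass F G G]

theorem mul_inv_apply_eq_mul_inv_apply_iff (τ : F) (a b : G) :
    a * (τ a)⁻¹ = b * (τ b)⁻¹ ↔ τ (b⁻¹ * a) = b⁻¹ * a := by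
  rw [map_mul, map_inv, mul_inv_eq_iff_eq_mul, mul_assoc, ← inv_mul_eq_iff_eq_mul, eq_comm]

variable [TopologicalSpace G]

theorem eventually_exists_eq_mul_inv_apply [ContinuousInv G] (τ : F) (hτc : Continuous τ)
    {e : OpenPartialHomeomorph G G} (he1 : 1 ∈ e.source) (hesq : e =ᶠ[𝓝 1] fun y => y * y) :
    ∀ᶠ x in 𝓝 (1 : G), τ x = x⁻¹ → ∃ k, x = k * (τ k)⁻¹ := by
  have hσ : Tendsto (fun y => (τ y)⁻¹) (𝓝 1) (𝓝 1) := by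
    simpa using (hτc.tendsto 1).inv
  set V := e.source ∩ {y | e y = y * y}
  have hV : V ∈ 𝓝 1 := inter_mem (e.open_source.mem_nhds he1) hesq
  have he11 : e 1 = 1 := by simpa using hesq.eq_of_nhds
  have himage : e '' (V ∩ (fun y => (τ y)⁻¹) ⁻¹' V) ∈ 𝓝 1 := by
    rw [← he11, ← e.map_nhds_eq he1]
    exact image_mem_map (inter_mem hV (hσ hV))
  filter_upwards [himage]
  rintro _ ⟨y, ⟨⟨hy, hyy : e y = y * y⟩, hσy,
    hσyy : e (τ y)⁻¹ = (τ y)⁻¹ * (τ y)⁻¹⟩, rfl⟩ hx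
  rw [hyy] at hx ⊢
  have hfix : (τ y)⁻¹ = y :=
    e.injOn hσy hy <| by rw [hσyy, hyy, ← mul_inv_rev, ← map_mul, hx, inv_inv]
  exact ⟨y, by rw [hfix]⟩

theorem isOpen_setOf_exists_eq_mul_inv_apply [IsTopologicalGroup G] (τ : F)
    (hτ : ∀ g, τ (τ g) = g)
    (hloc : ∀ᶠ x in 𝓝 (1 : G), τ x = x⁻¹ → ∃ k, x = k * (τ k)⁻¹) :
    IsOpen {x : {x : G // τ x = x⁻¹} | ∃ k : G, (x : G) = k * (τ k)⁻¹} := by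
  refine isOpen_iff_mem_nhds.2 fun x ⟨k, hk⟩ => (mem_nhds_subtype _ _ _).2 ?_
  have ht : Tendsto (fun z => k⁻¹ * z * τ k) (𝓝 (x : G)) (𝓝 1) := by
    refine Continuous.tendsto' (by fun_prop) _ _ ?_
    rw [hk]; group
  refine ⟨_, ht.eventually hloc, fun ⟨z, hzτ⟩ hz => ?_⟩
  obtain ⟨m, hm⟩ := hz (by
    rw [map_mul, map_mul, map_inv, hτ, show τ z = z⁻¹ from hzτ]; group)
  exact ⟨k * m, by rw [map_mul, mul_inv_rev, ← mul_assoc, mul_assoc k, ← hm]; group⟩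

theorem isClosed_setOf_exists_eq_mul_inv_apply [IsTopologicalGroup G] [CompactSpace G]
    [T2Space G] (τ : F) (hτ : ∀ g, τ (τ g) = g) (hτc : Continuous τ) :
    IsClosed {x : {x : G // τ x = x⁻¹} | ∃ k : G, (x : G) = k * (τ k)⁻¹} := by
  have hmem (k : G) : τ (k * (τ k)⁻¹) = (k * (τ k)⁻¹)⁻¹ := by
    rw [map_mul, map_inv, hτ, mul_inv_rev, inv_inv]
  have hf : Continuous fun k : G => (⟨k * (τ k)⁻¹, hmem k⟩ : {x : G // τ x = x⁻¹}) := by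
    fun_prop
  convert (isCompact_range hf).isClosed using 1
  ext x
  simp [Subtype.ext_iff, eq_comm]

end TwistedSquares

theorem stmt_14_general {E : Type*} [NormedAddCommGroup E] [NormedSpace ℝ E]
    {G : Type*} [TopologicalSpace G] [ChartedSpace E G] [Group G]
    [LieGroup (modelWithCornersSelf ℝ E) (⊤ : ℕ∞) G]
    [CompactSpace G]
    (τ : G ≃* G) (hτ : ∀ g, τ (τ g) = g)
    (hsmooth : ContMDiff (modelWithCornersSelf ℝ E) (modelWithCornersSelf ℝ E) (⊤ : ℕ∞)
      (τ : G → G)) :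
    (∀ a b : G, a * (τ a)⁻¹ = b * (τ b)⁻¹ ↔ τ (b⁻¹ * a) = b⁻¹ * a) ∧
    IsOpen {x : {x : G // τ x = x⁻¹} | ∃ k : G, (x : G) = k * (τ k)⁻¹} ∧
    IsClosed {x : {x : G // τ x = x⁻¹} | ∃ k : G, (x : G) = k * (τ k)⁻¹} := by
  have := topologicalGroup_of_lieGroup 𝓘(ℝ, E) (⊤ : ℕ∞) (G := G)
  have := ChartedSpace.t1Space E G
  have := FiniteDimensional.of_locallyCompact_manifold G 𝓘(ℝ, E)
  have := FiniteDimensional.complete ℝ E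
  have hτc : Continuous τ := hsmooth.continuous
  obtain ⟨e, he1, hesq⟩ :=
    exists_openPartialHomeomorph_eventuallyEq_mul_self (𝕜 := ℝ) (E := E) (G := G)
      (n := (⊤ : ℕ∞)) (by simp)
  have hloc := eventually_exists_eq_mul_inv_apply τ hτc he1 hesq
  exact ⟨mul_inv_apply_eq_mul_inv_apply_iff τ, isOpen_setOf_exists_eq_mul_inv_apply τ hτ hloc,
    isClosed_setOf_exists_eq_mul_inv_apply τ hτ hτc⟩

/-- Let `G` be a compact connected Lie group and `τ` a smooth involutive automorphism
with fixed-point subgroup `G_τ`. Define `G* = {x : τ x = x⁻¹}` and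
`f(k G_τ) = k (τ k)⁻¹`. Then `f` is well defined and injective on cosets
(`f a = f b ↔ b⁻¹ a ∈ G_τ`), and its image `{k (τ k)⁻¹ : k ∈ G}`, viewed as a subset
of `G*`, is both open and closed in `G*`. -/
theorem stmt_14 {E : Type*} [NormedAddCommGroup E] [NormedSpace ℝ E]
    {G : Type*} [TopologicalSpace G] [ChartedSpace E G] [Group G]
    [LieGroup (modelWithCornersSelf ℝ E) (⊤ : ℕ∞) G]
    [CompactSpace G] [ConnectedSpace G]
    (τ : G ≃* G) (hτ : ∀ g, τ (τ g) = g)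
    (hsmooth : ContMDiff (modelWithCornersSelf ℝ E) (modelWithCornersSelf ℝ E) (⊤ : ℕ∞)
      (τ : G → G)) :
    (∀ a b : G, a * (τ a)⁻¹ = b * (τ b)⁻¹ ↔ τ (b⁻¹ * a) = b⁻¹ * a) ∧
    IsOpen {x : {x : G // τ x = x⁻¹} | ∃ k : G, (x : G) = k * (τ k)⁻¹} ∧
    IsClosed {x : {x : G // τ x = x⁻¹} | ∃ k : G, (x : G) = k * (τ k)⁻¹} :=
  stmt_14_general τ hτ hsmooth
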